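/- arXiv:0801.1483 — 2 statements merged into one kernel-verified Lean document; each statement's English description precedes it below -/
import Mathlib

section
/- Let F^* be the leapfrog transform of a fullerene graph F, and let M^0 be the perfect matching of F^* consisting of the edges dual to the edges of F. Then every fresh face of F^* (a face not contained in any face of F) is M^0-alternating, and the heritable faces of F^* (faces contained in faces of F) are pairwise vertex-disjoint. -/
open SimpleGraph

/-- The set of vertices incident with some edge of a face boundary. -/
def faceVerts (f : Finset (Sym2 V)) : Set V := {v | ∃ e ∈ f, v ∈ e}

/-- `G` has a perfect matching. -/
def HasPM (G : SimpleGraph V) : Prop := ∃ M : G.Subgraph, M.IsPerfectMatching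

/-- Number of odd connected components of `G`. -/
noncomputable def oddComponents (G : SimpleGraph V) : ℕ :=
  Nat.card {c : G.ConnectedComponent // Odd (Nat.card c.supp)}

/-- `G` is cyclically `k`-edge-connected: no set of fewer than `k` edges
separates `G` into two parts each containing a cycle. -/
def CycEdgeConn (G : SimpleGraph V) (k : ℕ) : Prop :=
  ∀ D : Finset (Sym2 V), D.card < k →
    ¬ ∃ A : Set V, (∀ a ∈ A, ∀ b ∉ A, ¬ (G.deleteEdges (↑D : Set (Sym2 V))).Adj a b) ∧
      ¬ (G.induce A).IsAcyclic ∧ ¬ (G.induce Aᶜ).IsAcyclic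

/-- A combinatorial fullerene: a cubic, 3-connected plane graph presented together with
its face boundaries (as edge sets of boundary cycles), every face a pentagon or a
hexagon, each edge on exactly two faces, Euler's formula, and exactly 12 pentagons. -/
structure IsFullerene [Fintype V] [DecidableEq V] (G : SimpleGraph V)
    (faces : Finset (Finset (Sym2 V))) : Prop where
  cubic : ∀ v : V, (G.neighborSet v).ncard = 3
  card_ge : 4 ≤ Fintype.card V
  threeConnected : ∀ s : Set V, s.ncard ≤ 2 → (G.induce sᶜ).Connected
  face_cycle : ∀ f ∈ faces, ∃ (v : V) (c : G.Walk v v), c.IsCycle ∧ c.edges.toFinset = f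
  face_size : ∀ f ∈ faces, f.card = 5 ∨ f.card = 6
  edge_two_faces : ∀ e ∈ G.edgeSet, (faces.filter (fun f => e ∈ f)).card = 2
  euler : Fintype.card V + faces.card = G.edgeSet.ncard + 2
  pentagons : (faces.filter (fun f => f.card = 5)).card = 12
/-- Vertices of the leapfrog transform of a plane fullerene `(G, faces)`:
flags (edge, incident face), i.e. the triangles of the intermediate triangulation. -/
def LVert [DecidableEq V] (faces : Finset (Finset (Sym2 V))) : Type _ :=
  {p : Sym2 V × Finset (Sym2 V) // p.2 ∈ faces ∧ p.1 ∈ p.2}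

/-- The leapfrog transform `F^*`: two flags are adjacent if they share the underlying
edge of `F` (dual edges, forming the matching `M⁰`), or lie on the same face of `F`
with consecutive underlying edges. -/
def LGraph [DecidableEq V] (faces : Finset (Finset (Sym2 V))) :
    SimpleGraph (LVert faces) where
  Adj a b := (a.1.1 = b.1.1 ∧ a.1.2 ≠ b.1.2) ∨
    (a.1.2 = b.1.2 ∧ a.1.1 ≠ b.1.1 ∧ ∃ v : V, v ∈ a.1.1 ∧ v ∈ b.1.1)
  symm := by
    constructor
    rintro a b (⟨h1, h2⟩ | ⟨h1, h2, v, hv1, hv2⟩)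
    · exact Or.inl ⟨h1.symm, h2.symm⟩
    · exact Or.inr ⟨h1.symm, h2.symm, v, hv2, hv1⟩
  loopless := by
    constructor
    rintro a (⟨h1, h2⟩ | ⟨h1, h2, -⟩) <;> simp_all

/-- The perfect matching `M⁰` of the leapfrog graph given by the edges dual to the
edges of `F`. -/
def M0 [DecidableEq V] (faces : Finset (Finset (Sym2 V))) : (LGraph faces).Subgraph where
  verts := Set.univ
  Adj a b := (LGraph faces).Adj a b ∧ a.1.1 = b.1.1
  adj_sub h := h.1
  edge_vert _ := Set.mem_univ _
  symm := ⟨fun a b h => ⟨(LGraph faces).symm.symm _ _ h.1, h.2.symm⟩⟩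

/-- The heritable face of `F^*` lying inside the face `f` of `F` (its edge set). -/
def heritableFace [DecidableEq V] (faces : Finset (Finset (Sym2 V)))
    (f : Finset (Sym2 V)) : Set (Sym2 (LVert faces)) :=
  {E | ∃ a b : LVert faces, E = s(a, b) ∧ (LGraph faces).Adj a b ∧
    a.1.2 = f ∧ b.1.2 = f}

/-- The fresh face of `F^*` surrounding the vertex `v` of `F` (its edge set). -/
def freshFace [DecidableEq V] (faces : Finset (Finset (Sym2 V))) (v : V) :
    Set (Sym2 (LVert faces)) :=
  {E | ∃ a b : LVert faces, E = s(a, b) ∧ (LGraph faces).Adj a b ∧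
    v ∈ a.1.1 ∧ v ∈ b.1.1}

/-- Vertices of a face given by a set of edges. -/
def sFaceVerts {W : Type*} (fc : Set (Sym2 W)) : Set W := {a | ∃ E ∈ fc, a ∈ E}

/-- A face (given by its edge set) is `M`-alternating: each of its vertices is
matched by `M` along an edge of the face. -/
def AltSetFace {W : Type*} {G : SimpleGraph W} (M : G.Subgraph)
    (fc : Set (Sym2 W)) : Prop :=
  ∀ a ∈ sFaceVerts fc, ∃ b, s(a, b) ∈ fc ∧ M.Adj a b

theorem Finset.existsUnique_ne_of_card_eq_two {α : Type*} [DecidableEq α] {s : Finset α}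
    (hs : s.card = 2) {a : α} (ha : a ∈ s) : ∃! b, b ∈ s ∧ b ≠ a := by
  obtain ⟨b, hb⟩ := Finset.card_eq_one.mp (by rw [Finset.card_erase_of_mem ha, hs] :
    (s.erase a).card = 1)
  refine ⟨b, ?_, fun c hc => ?_⟩
  · simpa [and_comm] using (Finset.ext_iff.mp hb b).mpr (Finset.mem_singleton_self b)
  · simpa [hc.1, hc.2] using (Finset.ext_iff.mp hb c)

theorem IsFullerene.card_faces_containing_eq_two {V : Type*} [Fintype V] [DecidableEq V]
    {G : SimpleGraph V} {faces : Finset (Finset (Sym2 V))} (hF : IsFullerene G faces)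
    {f : Finset (Sym2 V)} (hf : f ∈ faces) {e : Sym2 V} (he : e ∈ f) :
    (faces.filter (fun g => e ∈ g)).card = 2 := by
  obtain ⟨_, c, -, hc⟩ := hF.face_cycle f hf
  refine hF.edge_two_faces e (c.edges_subset_edgeSet ?_)
  rwa [← List.mem_toFinset, hc]

section Leapfrog

variable {V : Type*} [DecidableEq V] {faces : Finset (Finset (Sym2 V))}

theorem M0_adj_iff {a b : LVert faces} :
    (M0 faces).Adj a b ↔ a.1.1 = b.1.1 ∧ a.1.2 ≠ b.1.2 := by
  refine ⟨fun ⟨hadj, he⟩ => ⟨he, ?_⟩, fun h => ⟨Or.inl h, h.1⟩⟩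
  rcases hadj with ⟨-, hne⟩ | ⟨-, hne, -⟩
  · exact hne
  · exact absurd he hne

/-- A flag `(e, f)` is matched to the flag `(e, g)` for the other face `g` on `e`. -/
theorem M0_isPerfectMatching
    (h : ∀ f ∈ faces, ∀ e ∈ f, (faces.filter (fun g => e ∈ g)).card = 2) :
    (M0 faces).IsPerfectMatching := by
  refine ⟨fun a _ => ?_, fun a => Set.mem_univ a⟩
  obtain ⟨⟨e, f⟩, hf, he⟩ := a
  obtain ⟨g, ⟨hg, hgf⟩, huniq⟩ := Finset.existsUnique_ne_of_card_eq_two (h f hf e he)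
    (Finset.mem_filter.mpr ⟨hf, he⟩)
  rw [Finset.mem_filter] at hg
  refine ⟨⟨(e, g), hg⟩, M0_adj_iff.mpr ⟨rfl, Ne.symm hgf⟩, ?_⟩
  rintro ⟨⟨e', g'⟩, hg'⟩ hadj
  obtain ⟨rfl, hne⟩ := M0_adj_iff.mp hadj
  have : g' = g := huniq g' ⟨Finset.mem_filter.mpr hg', Ne.symm hne⟩
  subst this
  rfl

theorem mem_edge_of_mem_sFaceVerts_freshFace {v : V} {a : LVert faces}
    (ha : a ∈ sFaceVerts (freshFace faces v)) : v ∈ a.1.1 := by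
  obtain ⟨_, ⟨c, d, rfl, -, hc, hd⟩, haE⟩ := ha
  rcases Sym2.mem_iff.mp haE with rfl | rfl
  · exact hc
  · exact hd

theorem face_eq_of_mem_sFaceVerts_heritableFace {f : Finset (Sym2 V)} {a : LVert faces}
    (ha : a ∈ sFaceVerts (heritableFace faces f)) : a.1.2 = f := by
  obtain ⟨_, ⟨c, d, rfl, -, hc, hd⟩, haE⟩ := ha
  rcases Sym2.mem_iff.mp haE with rfl | rfl
  · exact hc
  · exact hd

theorem altSetFace_freshFace (hM : (M0 faces).IsPerfectMatching) (v : V) :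
    AltSetFace (M0 faces) (freshFace faces v) := by
  intro a ha
  have hva := mem_edge_of_mem_sFaceVerts_freshFace ha
  obtain ⟨b, hab, -⟩ := hM.1 (hM.2 a)
  have hvb : v ∈ b.1.1 := (M0_adj_iff.mp hab).1 ▸ hva
  exact ⟨b, ⟨a, b, rfl, hab.1, hva, hvb⟩, hab⟩

theorem disjoint_sFaceVerts_heritableFace {f g : Finset (Sym2 V)} (hfg : f ≠ g) :
    Disjoint (sFaceVerts (heritableFace faces f)) (sFaceVerts (heritableFace faces g)) :=
  Set.disjoint_left.mpr fun _ haf hag =>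
    hfg ((face_eq_of_mem_sFaceVerts_heritableFace haf).symm.trans
      (face_eq_of_mem_sFaceVerts_heritableFace hag))

end Leapfrog

/-- in the leapfrog transform of a fullerene graph, `M⁰` is a perfect
matching, every fresh face is `M⁰`-alternating, and the heritable faces are pairwise
vertex-disjoint. -/
theorem leapfrog_M0_alternating {V : Type*} [Fintype V] [DecidableEq V]
    (G : SimpleGraph V) (faces : Finset (Finset (Sym2 V)))
    (hF : IsFullerene G faces) :
    (M0 faces).IsPerfectMatching ∧
    (∀ v : V, AltSetFace (M0 faces) (freshFace faces v)) ∧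
    (∀ f ∈ faces, ∀ g ∈ faces, f ≠ g →
      Disjoint (sFaceVerts (heritableFace faces f)) (sFaceVerts (heritableFace faces g))) := by
  have hM : (M0 faces).IsPerfectMatching :=
    M0_isPerfectMatching fun _ hf _ he => hF.card_faces_containing_eq_two hf he
  exact ⟨hM, altSetFace_freshFace hM, fun _ _ _ _ hfg => disjoint_sFaceVerts_heritableFace hfg⟩
end

section
/- The fullerene graph C_70 is 2-resonant: any two disjoint hexagonal faces of C_70 are simultaneously alternating with respect to some perfect matching. -/
open SimpleGraph

/-- The face `f` is `M`-alternating: every vertex of `f` is matched by `M`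
along an edge of `f`. -/
def AltFace (G : SimpleGraph V) (M : G.Subgraph) (f : Finset (Sym2 V)) : Prop :=
  ∀ v ∈ faceVerts f, ∃ u, s(v, u) ∈ f ∧ M.Adj v u

/-- A set of (disjoint hexagonal) faces is a resonant pattern if some perfect matching
of `G` is alternating on all of them. -/
def IsResonantPattern (G : SimpleGraph V) (H : Finset (Finset (Sym2 V))) : Prop :=
  ∃ M : G.Subgraph, M.IsPerfectMatching ∧ ∀ f ∈ H, AltFace G M f

/-- `G` (with face set `faces`) is `k`-resonant. -/
def KResonant [Fintype V] [DecidableEq V] (G : SimpleGraph V)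
    (faces : Finset (Finset (Sym2 V))) (k : ℕ) : Prop :=
  ∀ H : Finset (Finset (Sym2 V)), H ⊆ faces → (∀ f ∈ H, f.card = 6) →
    (∀ f ∈ H, ∀ g ∈ H, f ≠ g → Disjoint (faceVerts f) (faceVerts g)) →
    H.card ≤ k → IsResonantPattern G H
/-- The fullerene graph C70 (D5h), on vertex set `Fin 70`. -/
def C70 : SimpleGraph (Fin 70) :=
  SimpleGraph.fromEdgeSet {s(0, 1), s(0, 4), s(0, 5), s(1, 2), s(1, 6), s(2, 3), s(2, 7), s(3, 4), s(3, 8), s(4, 9), s(5, 10), s(5, 11), s(6, 12), s(6, 13), s(7, 14), s(7, 15), s(8, 16), s(8, 17), s(9, 18), s(9, 19), s(10, 19), s(10, 20), s(11, 12), s(11, 21), s(12, 22), s(13, 14), s(13, 23), s(14, 24), s(15, 16), s(15, 25), s(16, 26), s(17, 18), s(17, 27), s(18, 28), s(19, 29), s(20, 21), s(20, 30), s(21, 31), s(22, 23), s(22, 32), s(23, 33), s(24, 25), s(24, 34), s(25, 35), s(26, 27), s(26, 36), s(27, 37), s(28, 29), s(28, 38), s(29, 39), s(30, 39), s(30, 40),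 s(31, 32), s(31, 41), s(32, 42), s(33, 34), s(33, 43), s(34, 44), s(35, 36), s(35, 45), s(36, 46), s(37, 38), s(37, 47), s(38, 48), s(39, 49), s(40, 41), s(40, 50), s(41, 51), s(42, 43), s(42, 52), s(43, 53), s(44, 45), s(44, 54), s(45, 55), s(46, 47), s(46, 56), s(47, 57), s(48, 49), s(48, 58), s(49, 59), s(50, 59), s(50, 60), s(51, 52), s(51, 60), s(52, 61), s(53, 54), s(53, 61), s(54, 62), s(55, 56), s(55, 62), s(56, 63), s(57, 58), s(57, 63), s(58, 64), s(59, 64), s(60, 65), s(61, 66), s(62, 67), s(63, 68), s(64, 69), s(65, 66), s(65, 69), s(66, 67), s(67, 68), s(68, 69)}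

/-- The faces of C70, each given by its boundary edge set. -/
def C70faces : Finset (Finset (Sym2 (Fin 70))) :=
  {{s(0, 1), s(0, 4), s(1, 2), s(2, 3), s(3, 4)},
   {s(0, 1), s(0, 5), s(1, 6), s(5, 11), s(6, 12), s(11, 12)},
   {s(5, 10), s(5, 11), s(10, 20), s(11, 21), s(20, 21)},
   {s(11, 12), s(11, 21), s(12, 22), s(21, 31), s(22, 32), s(31, 32)},
   {s(20, 21), s(20, 30), s(21, 31), s(30, 40), s(31, 41), s(40, 41)},
   {s(31, 32), s(31, 41), s(32, 42), s(41, 51), s(42, 52), s(51, 52)},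
   {s(40, 41), s(40, 50), s(41, 51), s(50, 60), s(51, 60)},
   {s(51, 52), s(51, 60), s(52, 61), s(60, 65), s(61, 66), s(65, 66)},
   {s(1, 2), s(1, 6), s(2, 7), s(6, 13), s(7, 14), s(13, 14)},
   {s(6, 12), s(6, 13), s(12, 22), s(13, 23), s(22, 23)},
   {s(13, 14), s(13, 23), s(14, 24), s(23, 33), s(24, 34), s(33, 34)},
   {s(22, 23), s(22, 32), s(23, 33), s(32, 42), s(33, 43), s(42, 43)},
   {s(33, 34), s(33, 43), s(34, 44), s(43, 53), s(44, 54), s(53, 54)},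
   {s(42, 43), s(42, 52), s(43, 53), s(52, 61), s(53, 61)},
   {s(53, 54), s(53, 61), s(54, 62), s(61, 66), s(62, 67), s(66, 67)},
   {s(2, 3), s(2, 7), s(3, 8), s(7, 15), s(8, 16), s(15, 16)},
   {s(7, 14), s(7, 15), s(14, 24), s(15, 25), s(24, 25)},
   {s(15, 16), s(15, 25), s(16, 26), s(25, 35), s(26, 36), s(35, 36)},
   {s(24, 25), s(24, 34), s(25, 35), s(34, 44), s(35, 45), s(44, 45)},
   {s(35, 36), s(35, 45), s(36, 46), s(45, 55), s(46, 56), s(55, 56)},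
   {s(44, 45), s(44, 54), s(45, 55), s(54, 62), s(55, 62)},
   {s(55, 56), s(55, 62), s(56, 63), s(62, 67), s(63, 68), s(67, 68)},
   {s(3, 4), s(3, 8), s(4, 9), s(8, 17), s(9, 18), s(17, 18)},
   {s(8, 16), s(8, 17), s(16, 26), s(17, 27), s(26, 27)},
   {s(17, 18), s(17, 27), s(18, 28), s(27, 37), s(28, 38), s(37, 38)},
   {s(26, 27), s(26, 36), s(27, 37), s(36, 46), s(37, 47), s(46, 47)},
   {s(37, 38), s(37, 47), s(38, 48), s(47, 57), s(48, 58), s(57, 58)},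
   {s(46, 47), s(46, 56), s(47, 57), s(56, 63), s(57, 63)},
   {s(57, 58), s(57, 63), s(58, 64), s(63, 68), s(64, 69), s(68, 69)},
   {s(0, 4), s(0, 5), s(4, 9), s(5, 10), s(9, 19), s(10, 19)},
   {s(9, 18), s(9, 19), s(18, 28), s(19, 29), s(28, 29)},
   {s(10, 19), s(10, 20), s(19, 29), s(20, 30), s(29, 39), s(30, 39)},
   {s(28, 29), s(28, 38), s(29, 39), s(38, 48), s(39, 49), s(48, 49)},
   {s(30, 39), s(30, 40), s(39, 49), s(40, 50), s(49, 59), s(50, 59)},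
   {s(48, 49), s(48, 58), s(49, 59), s(58, 64), s(59, 64)},
   {s(50, 59), s(50, 60), s(59, 64), s(60, 65), s(64, 69), s(65, 69)},
   {s(65, 66), s(65, 69), s(66, 67), s(67, 68), s(68, 69)}}

/-!
A perfect matching is alternating on a hexagonal face exactly when it matches every vertex of the
face's 6-cycle to one of its two neighbours along the cycle. Three Kekulé structures of C70
suffice: every pair of equal or vertex-disjoint hexagons is alternating in one of them. Presented as
fixed-point-free involutions along edges, together with the vertex cycles of the 25 hexagons, they
reduce the theorem to finite checks.
-/

namespace SimpleGraph.Subgraph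

variable {V : Type*} {G : SimpleGraph V}

def ofInvolution (p : V → V) (hp : Function.Involutive p) (hadj : ∀ v, G.Adj v (p v)) :
    G.Subgraph where
  verts := Set.univ
  Adj v w := p v = w
  adj_sub := by
    rintro v _ rfl
    exact hadj v
  edge_vert _ := Set.mem_univ _
  symm := ⟨by
    rintro v _ rfl
    exact hp v⟩

theorem isPerfectMatching_ofInvolution (p : V → V) (hp : Function.Involutive p)
    (hadj : ∀ v, G.Adj v (p v)) : (ofInvolution p hp hadj).IsPerfectMatching :=
  isPerfectMatching_iff.2 fun v => ⟨p v, rfl, fun _ h => Eq.symm h⟩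

end SimpleGraph.Subgraph

section Resonance

variable {V : Type*} {G : SimpleGraph V}

theorem kResonant_two_of_pair [Fintype V] [DecidableEq V] {faces : Finset (Finset (Sym2 V))}
    (hpm : HasPM G)
    (hpair : ∀ f ∈ faces, ∀ g ∈ faces, f.card = 6 → g.card = 6 →
      (f = g ∨ Disjoint (faceVerts f) (faceVerts g)) → IsResonantPattern G {f, g}) :
    KResonant G faces 2 := by
  intro H hsub hhex hdisj hcard
  obtain h0 | h1 | h2 : H.card = 0 ∨ H.card = 1 ∨ H.card = 2 := by omega
  · obtain ⟨M, hM⟩ := hpm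
    exact ⟨M, hM, by simp [Finset.card_eq_zero.1 h0]⟩
  · obtain ⟨f, rfl⟩ := Finset.card_eq_one.1 h1
    have hf := Finset.mem_singleton_self f
    simpa using hpair f (hsub hf) f (hsub hf) (hhex f hf) (hhex f hf) (Or.inl rfl)
  · obtain ⟨f, g, hfg, rfl⟩ := Finset.card_eq_two.1 h2
    have hf : f ∈ ({f, g} : Finset _) := Finset.mem_insert_self f {g}
    have hg : g ∈ ({f, g} : Finset _) := Finset.mem_insert_of_mem (Finset.mem_singleton_self g)
    exact hpair f (hsub hf) g (hsub hg) (hhex f hf) (hhex g hg) (Or.inr (hdisj f hf g hg hfg))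

end Resonance

section Cycles

variable {V : Type*} [DecidableEq V]

def cycleDarts (c : List V) : List (V × V) := c.zip (c.rotate 1)

def cycleEdges (c : List V) : Finset (Sym2 V) :=
  ((cycleDarts c).map fun q => s(q.1, q.2)).toFinset

theorem mk_mem_cycleEdges {c : List V} {v w : V} :
    s(v, w) ∈ cycleEdges c ↔ (v, w) ∈ cycleDarts c ∨ (w, v) ∈ cycleDarts c := by
  simp only [cycleEdges, List.mem_toFinset, List.mem_map, Sym2.eq_iff, Prod.exists]
  constructor
  · rintro ⟨a, b, hab, ⟨rfl, rfl⟩ | ⟨rfl, rfl⟩⟩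
    exacts [Or.inl hab, Or.inr hab]
  · rintro (h | h)
    exacts [⟨v, w, h, Or.inl ⟨rfl, rfl⟩⟩, ⟨w, v, h, Or.inr ⟨rfl, rfl⟩⟩]

theorem faceVerts_cycleEdges (c : List V) : faceVerts (cycleEdges c) = {v | v ∈ c} := by
  ext v
  simp only [faceVerts, cycleEdges, List.mem_toFinset, List.mem_map, Set.mem_ofPred_eq]
  constructor
  · rintro ⟨_, ⟨⟨a, b⟩, hab, rfl⟩, hv⟩
    obtain ⟨ha, hb⟩ := List.of_mem_zip hab
    rcases Sym2.mem_iff.1 hv with rfl | rfl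
    exacts [ha, List.mem_rotate.1 hb]
  · intro hv
    obtain ⟨i, hi, rfl⟩ := List.mem_iff_getElem.1 hv
    have hi' : i < (cycleDarts c).length := by simp [cycleDarts, hi]
    exact ⟨_, ⟨_, List.getElem_mem hi', rfl⟩, by simp [cycleDarts]⟩

def MatchesAlong (p : V → V) (c : List V) : Prop :=
  ∀ v ∈ c, (v, p v) ∈ cycleDarts c ∨ (p v, v) ∈ cycleDarts c

instance (p : V → V) (c : List V) : Decidable (MatchesAlong p c) :=
  inferInstanceAs (Decidable (∀ v ∈ c, _))

theorem isResonantPattern_cycleEdges_pair {G : SimpleGraph V} {p : V → V}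
    (hp : Function.Involutive p) (hadj : ∀ v, G.Adj v (p v)) {c d : List V}
    (hc : MatchesAlong p c) (hd : MatchesAlong p d) :
    IsResonantPattern G {cycleEdges c, cycleEdges d} := by
  have halt : ∀ {e : List V}, MatchesAlong p e →
      AltFace G (Subgraph.ofInvolution p hp hadj) (cycleEdges e) := by
    intro e he v hv
    rw [faceVerts_cycleEdges] at hv
    exact ⟨p v, mk_mem_cycleEdges.2 (he v hv), rfl⟩
  refine ⟨_, Subgraph.isPerfectMatching_ofInvolution p hp hadj, ?_⟩
  simp only [Finset.mem_insert, Finset.mem_singleton, forall_eq_or_imp, forall_eq]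
  exact ⟨halt hc, halt hd⟩

end Cycles

def partnerOf {n : ℕ} (l : List (Fin n)) (v : Fin n) : Fin n := l.getD v v

set_option synthInstance.maxSize 100000 in
set_option synthInstance.maxHeartbeats 400000 in
instance C70.decidableAdj : DecidableRel C70.Adj :=
  inferInstanceAs (DecidableRel (fromEdgeSet _).Adj)

def C70hexagons : List (List (Fin 70)) :=
  [[0, 1, 6, 12, 11, 5],
   [11, 12, 22, 32, 31, 21],
   [20, 21, 31, 41, 40, 30],
   [31, 32, 42, 52, 51, 41],
   [51, 52, 61, 66, 65, 60],
   [1, 2, 7, 14, 13, 6],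
   [13, 14, 24, 34, 33, 23],
   [22, 23, 33, 43, 42, 32],
   [33, 34, 44, 54, 53, 43],
   [53, 54, 62, 67, 66, 61],
   [2, 3, 8, 16, 15, 7],
   [15, 16, 26, 36, 35, 25],
   [24, 25, 35, 45, 44, 34],
   [35, 36, 46, 56, 55, 45],
   [55, 56, 63, 68, 67, 62],
   [3, 4, 9, 18, 17, 8],
   [17, 18, 28, 38, 37, 27],
   [26, 27, 37, 47, 46, 36],
   [37, 38, 48, 58, 57, 47],
   [57, 58, 64, 69, 68, 63],
   [0, 4, 9, 19, 10, 5],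
   [10, 19, 29, 39, 30, 20],
   [28, 29, 39, 49, 48, 38],
   [30, 39, 49, 59, 50, 40],
   [50, 59, 64, 69, 65, 60]]

/-- Partner lists of three Kekulé structures of C70, found by a computer search. -/
def C70matchings : List (List (Fin 70)) :=
  [[5, 6, 7, 8, 9, 0, 1, 2, 3, 4,
    19, 12, 11, 14, 13, 16, 15, 18, 17, 10,
    21, 20, 23, 22, 25, 24, 27, 26, 29, 28,
    40, 41, 42, 43, 44, 45, 46, 47, 48, 49,
    30, 31, 32, 33, 34, 35, 36, 37, 38, 39,
    59, 52, 51, 54, 53, 56, 55, 58, 57, 50,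
    65, 66, 67, 68, 69, 60, 61, 62, 63, 64],
   [5, 6, 7, 8, 9, 0, 1, 2, 3, 4,
    19, 12, 11, 14, 13, 16, 15, 18, 17, 10,
    30, 31, 32, 33, 34, 35, 36, 37, 38, 39,
    20, 21, 22, 23, 24, 25, 26, 27, 28, 29,
    41, 40, 43, 42, 45, 44, 47, 46, 49, 48,
    59, 52, 51, 54, 53, 56, 55, 58, 57, 50,
    65, 66, 67, 68, 69, 60, 61, 62, 63, 64],
   [5, 6, 7, 8, 9, 0, 1, 2, 3, 4,
    20, 21, 22, 23, 24, 25, 26, 27, 28, 29,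
    10, 11, 12, 13, 14, 15, 16, 17, 18, 19,
    39, 32, 31, 34, 33, 36, 35, 38, 37, 30,
    50, 51, 52, 53, 54, 55, 56, 57, 58, 59,
    40, 41, 42, 43, 44, 45, 46, 47, 48, 49,
    65, 66, 67, 68, 69, 60, 61, 62, 63, 64]]

theorem C70matchings_spec : ∀ l ∈ C70matchings, ∀ v,
    partnerOf l (partnerOf l v) = v ∧ C70.Adj v (partnerOf l v) := by
  decide +kernel

theorem C70_hexagon_pairs_matched : ∀ c ∈ C70hexagons, ∀ d ∈ C70hexagons,
    (c = d ∨ ∀ v ∈ c, v ∉ d) →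
      ∃ l ∈ C70matchings, MatchesAlong (partnerOf l) c ∧ MatchesAlong (partnerOf l) d := by
  decide +kernel

set_option synthInstance.maxSize 100000 in
set_option synthInstance.maxHeartbeats 400000 in
theorem C70_hexagon_eq_cycleEdges :
    ∀ f ∈ C70faces, f.card = 6 → ∃ c ∈ C70hexagons, f = cycleEdges c := by
  -- Deciding membership in `C70faces` as it stands would deduplicate a finset of finsets;
  -- split it into its 37 faces first.
  simp only [C70faces, Finset.mem_insert, Finset.mem_singleton, forall_eq_or_imp, forall_eq]
  decide +kernel

theorem C70_hasPM : HasPM C70 := by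
  obtain ⟨hp, hadj⟩ := forall_and.1 (C70matchings_spec _ List.mem_cons_self)
  exact ⟨_, Subgraph.isPerfectMatching_ofInvolution _ hp hadj⟩

theorem C70_isResonantPattern_hexagon_pair {c d : List (Fin 70)} (hc : c ∈ C70hexagons)
    (hd : d ∈ C70hexagons) (hcd : c = d ∨ ∀ v ∈ c, v ∉ d) :
    IsResonantPattern C70 {cycleEdges c, cycleEdges d} := by
  obtain ⟨l, hl, hlc, hld⟩ := C70_hexagon_pairs_matched c hc d hd hcd
  obtain ⟨hp, hadj⟩ := forall_and.1 (C70matchings_spec l hl)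
  exact isResonantPattern_cycleEdges_pair hp hadj hlc hld

/-- C70 is 2-resonant: any two disjoint hexagonal faces of C70 are
simultaneously alternating with respect to some perfect matching. -/
theorem C70_two_resonant : KResonant C70 C70faces 2 := by
  refine kResonant_two_of_pair C70_hasPM fun f hf g hg hf6 hg6 hfg => ?_
  obtain ⟨c, hc, rfl⟩ := C70_hexagon_eq_cycleEdges f hf hf6
  rcases hfg with rfl | hdisj
  · exact C70_isResonantPattern_hexagon_pair hc hc (Or.inl rfl)
  · obtain ⟨d, hd, rfl⟩ := C70_hexagon_eq_cycleEdges g hg hg6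
    rw [faceVerts_cycleEdges, faceVerts_cycleEdges] at hdisj
    exact C70_isResonantPattern_hexagon_pair hc hd
      (Or.inr fun v hv hv' => Set.disjoint_left.1 hdisj hv hv')
end
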